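/- Let y_1, …, y_m be distinct real numbers and w_1, …, w_m ∈ ℂ satisfy e^{i y_j} w_j = conj(w_j) for all j. Define n(x) = Σ_{j=1}^m e^{i y_j} w_j/(x − y_j) and d(x) = Σ_{j=1}^m w_j/(x − y_j). Then for every real x not equal to any y_j one has n(x) = conj(d(x)), and consequently |n(x)/d(x)| = 1 for every real x ∉ {y_1, …, y_m} with d(x) ≠ 0. -/

import Mathlib

open ComplexConjugate

theorem Complex.conj_sum_div_ofReal_sub {ι : Type*} (s : Finset ι) (w : ι → ℂ) (y : ι → ℝ)
    (t : ℝ) : conj (∑ j ∈ s, w j / ((t : ℂ) - (y j : ℂ))) =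
      ∑ j ∈ s, conj (w j) / ((t : ℂ) - (y j : ℂ)) := by
  simp only [map_sum, map_div₀, map_sub, Complex.conj_ofReal]

theorem Complex.norm_conj_div_self {z : ℂ} (hz : z ≠ 0) : ‖conj z / z‖ = 1 := by
  rw [norm_div, Complex.norm_conj, div_self (norm_ne_zero_iff.mpr hz)]

theorem stmt_13 (m : ℕ)
    (y : Fin m → ℝ)
    (w : Fin m → ℂ)
    (hw : ∀ j, Complex.exp (Complex.I * (y j : ℝ)) * w j = starRingEnd ℂ (w j))
    (nf df : ℝ → ℂ)
    (hnf : ∀ t : ℝ, nf t = ∑ j, Complex.exp (Complex.I * (y j : ℝ)) * w j / ((t : ℂ) - ((y j : ℝ) : ℂ)))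
    (hdf : ∀ t : ℝ, df t = ∑ j, w j / ((t : ℂ) - ((y j : ℝ) : ℂ))) :
    (∀ t : ℝ, (∀ j, t ≠ y j) → nf t = starRingEnd ℂ (df t)) ∧
    (∀ t : ℝ, (∀ j, t ≠ y j) → df t ≠ 0 → ‖nf t / df t‖ = 1) := by
  have nf_eq_conj_df : ∀ t : ℝ, nf t = conj (df t) := fun t => by
    simp only [hnf, hdf, hw, Complex.conj_sum_div_ofReal_sub]
  refine ⟨fun t _ => nf_eq_conj_df t, fun t _ hd => ?_⟩
  rw [nf_eq_conj_df t]
  exact Complex.norm_conj_div_self hd
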